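/- For a Brownian motion with constant drift α in ℝ^d (d ≥ 3) started at x, the expectation E^{(α)}_x[∫_0^∞ V(√2 W_s) ds] = ∫_0^∞ ∫_{ℝ^d} V(√2 z) ρ^{(α)}(s, z−x) dz ds is maximized over x and α at x = 0, α = 0, where ρ^{(α)}(t,w) = (2πt)^{-d/2} exp(−|w−tα|²/(2t)) and V is nonnegative, spherically symmetric, and radially decreasing. -/

import Mathlib

open MeasureTheory Real Filter

noncomputable def heatKernel (d : ℕ) (u : ℝ) (w : EuclideanSpace ℝ (Fin d)) : ℝ :=
  (2 * Real.pi * u) ^ (-(d : ℝ) / 2) * Real.exp (-‖w‖ ^ 2 / (2 * u))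

/-- `W` is a standard `d`-dimensional Brownian motion started at `x` under `P`:
probability measure, measurable marginals, start at `x`, Gaussian increments with the
heat-kernel density, and independent increments. -/
structure IsBrownianMotion {Ω : Type*} [MeasurableSpace Ω] (d : ℕ) (P : Measure Ω)
    (W : ℝ → Ω → EuclideanSpace ℝ (Fin d)) (x : EuclideanSpace ℝ (Fin d)) : Prop where
  isProb : IsProbabilityMeasure P
  meas : ∀ t, Measurable (W t)
  start : ∀ᵐ ω ∂P, W 0 ω = x
  gauss_incr : ∀ s t : ℝ, 0 ≤ s → s < t →
    Measure.map (fun ω => W t ω - W s ω) P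
      = volume.withDensity (fun w => ENNReal.ofReal (heatKernel d (t - s) w))
  indep_incr : ∀ (n : ℕ) (ts : ℕ → ℝ), Monotone ts → (∀ i, 0 ≤ ts i) →
    ProbabilityTheory.iIndepFun
      (fun i : Fin n => fun ω => W (ts (i + 1)) ω - W (ts i) ω) P

/-!
Fix the time `s > 0`. By the layer-cake formula in both factors, `∫ f(z) g(z - c) dz` is an
integral over levels `t, u > 0` of `|{f > u} ∩ (c + {g > t})|`. For radially decreasing `f`, `g`
these superlevel sets are norm-lower sets, and norm-lower sets are nested. Hence the
intersection lies in `{f > u}` or in a translate of `{g > t}`, and either way its measure is at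
most that of the centred intersection `{f > u} ∩ {g > t}`. Apply this to `f = V(√2 ·)` and the
heat kernel `g` at time `s`, with `c = x + sα`.
-/

section Rearrangement

variable {E : Type*} [NormedAddCommGroup E]

def IsNormLowerSet (A : Set E) : Prop := ∀ z ∈ A, ∀ w, ‖w‖ ≤ ‖z‖ → w ∈ A

/-- Symmetric decreasing, in the language of rearrangement inequalities. -/
def RadiallyAntitone (f : E → ℝ) : Prop := ∀ x y, ‖x‖ ≤ ‖y‖ → f y ≤ f x

theorem IsNormLowerSet.subset_or_subset {A B : Set E} (hA : IsNormLowerSet A)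
    (hB : IsNormLowerSet B) : A ⊆ B ∨ B ⊆ A := by
  by_contra! h
  obtain ⟨⟨a, haA, haB⟩, ⟨b, hbB, hbA⟩⟩ := And.imp Set.not_subset.1 Set.not_subset.1 h
  rcases le_total ‖a‖ ‖b‖ with hab | hba
  · exact haB (hB b hbB a hab)
  · exact hbA (hA a haA b hba)

theorem RadiallyAntitone.isNormLowerSet_setOf_lt {f : E → ℝ} (hf : RadiallyAntitone f) (t : ℝ) :
    IsNormLowerSet {z | t < f z} :=
  fun z hz w hw => hz.trans_le (hf w z hw)

theorem RadiallyAntitone.comp_smul {𝕜 : Type*} [NormedField 𝕜] [NormedSpace 𝕜 E] {f : E → ℝ}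
    (hf : RadiallyAntitone f) (a : 𝕜) : RadiallyAntitone fun z => f (a • z) := by
  intro x y h
  refine hf _ _ ?_
  rw [norm_smul, norm_smul]
  exact mul_le_mul_of_nonneg_left h (norm_nonneg a)

variable [MeasurableSpace E] [MeasurableAdd E] (μ : Measure E)

theorem lintegral_mul_comp_sub_eq {f g : E → ℝ} (hfm : Measurable f) (hgm : Measurable g)
    (hf0 : 0 ≤ f) (hg0 : 0 ≤ g) (c : E) :
    ∫⁻ z, ENNReal.ofReal (f z * g (z - c)) ∂μ
      = ∫⁻ t in Set.Ioi 0, ∫⁻ z in (fun z => z - c) ⁻¹' {w | t < g w}, ENNReal.ofReal (f z) ∂μ := by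
  have hgcm : Measurable fun z => g (z - c) :=
    hgm.comp (by simpa only [sub_eq_add_neg] using measurable_add_const (-c))
  simp_rw [ENNReal.ofReal_mul (hf0 _)]
  rw [← Pi.mul_def,
    ← lintegral_withDensity_eq_lintegral_mul _ hfm.ennreal_ofReal hgcm.ennreal_ofReal,
    lintegral_eq_lintegral_meas_lt (f := fun z => g (z - c)) _ (ae_of_all _ fun z => hg0 (z - c))
      hgcm.aemeasurable]
  refine setLIntegral_congr_fun measurableSet_Ioi fun t _ => ?_
  exact withDensity_apply _ (measurableSet_lt measurable_const hgcm)

variable [μ.IsAddRightInvariant]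

theorem measure_inter_preimage_sub_le {A B : Set E} (hA : IsNormLowerSet A)
    (hB : IsNormLowerSet B) (c : E) :
    μ (A ∩ (fun z => z - c) ⁻¹' B) ≤ μ (A ∩ B) := by
  rcases hA.subset_or_subset hB with hAB | hBA
  · calc μ (A ∩ (fun z => z - c) ⁻¹' B) ≤ μ A := measure_mono Set.inter_subset_left
      _ = μ (A ∩ B) := by rw [Set.inter_eq_self_of_subset_left hAB]
  · calc μ (A ∩ (fun z => z - c) ⁻¹' B) ≤ μ ((fun z => z + -c) ⁻¹' B) := by
          simp only [← sub_eq_add_neg]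
          exact measure_mono Set.inter_subset_right
      _ = μ (A ∩ B) := by
          rw [measure_preimage_add_right, Set.inter_eq_self_of_subset_right hBA]

theorem setLIntegral_preimage_sub_le {f : E → ℝ} (hfm : Measurable f) (hf0 : 0 ≤ f)
    (hf : RadiallyAntitone f) {B : Set E} (hB : IsNormLowerSet B) (c : E) :
    ∫⁻ z in (fun z => z - c) ⁻¹' B, ENNReal.ofReal (f z) ∂μ
      ≤ ∫⁻ z in B, ENNReal.ofReal (f z) ∂μ := by
  rw [lintegral_eq_lintegral_meas_lt _ (ae_of_all _ hf0) hfm.aemeasurable,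
    lintegral_eq_lintegral_meas_lt _ (ae_of_all _ hf0) hfm.aemeasurable]
  refine lintegral_mono fun t => ?_
  have hlt : MeasurableSet {z | t < f z} := measurableSet_lt measurable_const hfm
  rw [Measure.restrict_apply hlt, Measure.restrict_apply hlt]
  exact measure_inter_preimage_sub_le μ (hf.isNormLowerSet_setOf_lt t) hB c

theorem lintegral_mul_comp_sub_le {f g : E → ℝ} (hfm : Measurable f) (hgm : Measurable g)
    (hf0 : 0 ≤ f) (hg0 : 0 ≤ g) (hf : RadiallyAntitone f) (hg : RadiallyAntitone g) (c : E) :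
    ∫⁻ z, ENNReal.ofReal (f z * g (z - c)) ∂μ ≤ ∫⁻ z, ENNReal.ofReal (f z * g z) ∂μ := by
  have h0 := lintegral_mul_comp_sub_eq μ hfm hgm hf0 hg0 0
  simp only [sub_zero, Set.preimage_id'] at h0
  rw [lintegral_mul_comp_sub_eq μ hfm hgm hf0 hg0 c, h0]
  exact lintegral_mono fun t => setLIntegral_preimage_sub_le μ hfm hf0 hf
    (hg.isNormLowerSet_setOf_lt t) c

end Rearrangement

section HeatKernel

variable {d : ℕ} {s : ℝ}

theorem heatKernel_nonneg (hs : 0 ≤ s) : 0 ≤ heatKernel d s := fun w => by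
  unfold heatKernel; positivity

theorem continuous_heatKernel : Continuous (heatKernel d s) := by
  unfold heatKernel; fun_prop

theorem radiallyAntitone_heatKernel (hs : 0 ≤ s) : RadiallyAntitone (heatKernel d s) := by
  intro x y h
  unfold heatKernel
  gcongr

end HeatKernel

theorem stmt17_general (d : ℕ) (V : EuclideanSpace ℝ (Fin d) → ℝ)
    (hVm : Measurable V) (hV0 : ∀ x, 0 ≤ V x)
    (hVdec : ∀ x y, ‖x‖ ≤ ‖y‖ → V y ≤ V x) :
    ∀ x α : EuclideanSpace ℝ (Fin d),
      ∫⁻ s in Set.Ioi (0 : ℝ),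
          ∫⁻ z, ENNReal.ofReal (V (Real.sqrt 2 • z) * heatKernel d s (z - x - s • α))
        ≤ ∫⁻ s in Set.Ioi (0 : ℝ),
            ∫⁻ z, ENNReal.ofReal (V (Real.sqrt 2 • z) * heatKernel d s z) := by
  intro x α
  refine setLIntegral_mono' measurableSet_Ioi fun s hs => ?_
  simpa only [sub_sub, Function.comp_apply] using lintegral_mul_comp_sub_le volume
    (hVm.comp (measurable_const_smul _)) continuous_heatKernel.measurable (fun z => hV0 _)
    (heatKernel_nonneg hs.le) (RadiallyAntitone.comp_smul hVdec _) (radiallyAntitone_heatKernel hs.le)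
    (x + s • α)

/-- The occupation integral `∫_0^∞ ∫ V(√2 z) ρ^{(α)}(s, z − x) dz ds` of Brownian motion
with drift `α` started at `x` is maximized at `x = 0`, `α = 0`, for `V` nonnegative,
spherically symmetric and radially decreasing (`ρ^{(α)}(s, w) = ρ(s, w − sα)` with `ρ`
the heat kernel). -/
theorem stmt17 (d : ℕ) (hd : 3 ≤ d) (V : EuclideanSpace ℝ (Fin d) → ℝ)
    (hVm : Measurable V) (hV0 : ∀ x, 0 ≤ V x)
    (hVsym : ∀ x y, ‖x‖ = ‖y‖ → V x = V y)
    (hVdec : ∀ x y, ‖x‖ ≤ ‖y‖ → V y ≤ V x) :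
    ∀ x α : EuclideanSpace ℝ (Fin d),
      ∫⁻ s in Set.Ioi (0 : ℝ),
          ∫⁻ z, ENNReal.ofReal (V (Real.sqrt 2 • z) * heatKernel d s (z - x - s • α))
        ≤ ∫⁻ s in Set.Ioi (0 : ℝ),
            ∫⁻ z, ENNReal.ofReal (V (Real.sqrt 2 • z) * heatKernel d s z) :=
  stmt17_general d V hVm hV0 hVdec
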